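/- Line Search Shift is consistent: for every mode x⋆ of f and every point x₀ in the basin of attraction of x⋆, there exists ρ₀ > 0 such that for every 0 < ρ ≤ ρ₀, every Line Search Shift sequence with parameter ρ started at x₀ converges to x⋆. Moreover, if κ₂ρ ≤ 1/2 (κ₂ = sup_x ‖∇²f(x)‖), then along any such sequence, until a critical point is reached one has (ρ/2)‖∇f(x_k)‖ ≤ ‖x_{k+1} − x_k‖ ≤ ρκ₁, where κ₁ = sup_x ‖∇f(x)‖. -/

import Mathlib

open Metric Set Filter MeasureTheory Topology
open scoped Topology RealInnerProductSpace

abbrev Euc (d : ℕ) := EuclideanSpace ℝ (Fin d)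

/-- The Hessian of `f`, as the derivative of the gradient field. -/
noncomputable def hess {d : ℕ} (f : Euc d → ℝ) (x : Euc d) : Euc d →L[ℝ] Euc d :=
  fderiv ℝ (gradient f) x

/-- The standing assumptions on the density `f`: nonnegative, integrable, vanishing at
infinity, twice differentiable with bounded and uniformly continuous zeroth, first and
second derivatives, and Morse (nonsingular Hessian at every critical point). -/
def IsNiceDensity {d : ℕ} (f : Euc d → ℝ) : Prop :=
  (∀ x, 0 ≤ f x) ∧
  Integrable f volume ∧
  Tendsto f (cocompact (Euc d)) (𝓝 0) ∧
  Differentiable ℝ f ∧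
  Differentiable ℝ (gradient f) ∧
  (∃ M, ∀ x, |f x| ≤ M) ∧
  (∃ M, ∀ x, ‖gradient f x‖ ≤ M) ∧
  (∃ M, ∀ x, ‖hess f x‖ ≤ M) ∧
  UniformContinuous f ∧
  UniformContinuous (gradient f) ∧
  UniformContinuous (hess f) ∧
  (∀ x, gradient f x = 0 → Function.Bijective (hess f x))

/-- `γ` is the gradient ascent curve of `f` starting at `x`, defined on `[0, ∞)`. -/
def IsGradFlow {d : ℕ} (f : Euc d → ℝ) (x : Euc d) (γ : ℝ → Euc d) : Prop :=
  γ 0 = x ∧ ∀ t ∈ Ici (0:ℝ), HasDerivWithinAt γ (gradient f (γ t)) (Ici 0) t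

/-- A Line Search Shift sequence with parameter `ρ` started at `x₀`: at each step one moves by
`ρ_k ∇f(x_k)` where `ρ_k ∈ [0, ρ]` maximizes `r ↦ f(x_k + r ∇f(x_k))` over `[0, ρ]`. -/
def IsLineSearchShiftSeq {d : ℕ} (f : Euc d → ℝ) (ρ : ℝ) (x₀ : Euc d) (x : ℕ → Euc d) :
    Prop :=
  x 0 = x₀ ∧ ∀ k : ℕ, ∃ ρk ∈ Icc (0:ℝ) ρ,
    x (k+1) = x k + ρk • gradient f (x k) ∧
    ∀ r ∈ Icc (0:ℝ) ρ, f (x k + r • gradient f (x k)) ≤ f (x (k+1))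

open scoped NNReal

/-! By a two-sided Taylor bound, as long as `κ₂ρ ≤ 1/2` the line search picks `ρ_k ≥ ρ/2` at every
noncritical point. Hence a Line Search Shift sequence is an explicit Euler scheme for the gradient
flow with steps `ρ_k ∈ [ρ/2, ρ]`.

Near a mode `x⋆` with nonsingular Hessian, `⟪∇f x, x - x⋆⟫ ≤ -c‖x - x⋆‖²`, so on a small ball
around `x⋆` every such step contracts `‖x - x⋆‖²` by the factor `1 - ρc/2`. Up to any fixed time
the Euler iterates stay within `O(ρ)` of the flow from `x₀`, which reaches that ball in finite time
without meeting a critical point on the way; so for small `ρ` the iterates reach the ball too. -/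

theorem IsLocalMax.deriv_deriv_nonpos {φ : ℝ → ℝ} {t : ℝ} (hmax : IsLocalMax φ t)
    (hφ : ContinuousAt φ t) : deriv (deriv φ) t ≤ 0 := by
  by_contra! hpos
  have hmin : IsLocalMin φ t := isLocalMin_of_deriv_deriv_pos hpos hmax.deriv_eq_zero hφ
  have hconst : φ =ᶠ[𝓝 t] fun _ => φ t := by
    filter_upwards [hmin, hmax] with u hu hu' using le_antisymm hu' hu
  have hderiv : deriv φ =ᶠ[𝓝 t] fun _ => 0 :=
    hconst.deriv.trans (.of_forall fun _ => deriv_const _ _)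
  exact hpos.ne' (hderiv.deriv_eq.trans (deriv_const _ _))

/-- The largest Rayleigh quotient of `T` is an eigenvalue, hence nonzero by injectivity. -/
theorem LinearMap.IsSymmetric.exists_inner_apply_self_le_neg {E : Type*} [NormedAddCommGroup E]
    [InnerProductSpace ℝ E] [FiniteDimensional ℝ E] {T : E →ₗ[ℝ] E} (hT : T.IsSymmetric)
    (hnonpos : ∀ v, ⟪T v, v⟫ ≤ 0) (hinj : Function.Injective T) :
    ∃ c > 0, ∀ v, ⟪T v, v⟫ ≤ -c * ‖v‖ ^ 2 := by
  cases subsingleton_or_nontrivial E with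
  | inl _ => exact ⟨1, one_pos, fun v => by simp [Subsingleton.elim v 0]⟩
  | inr _ =>
    have : Nonempty {v : E // v ≠ 0} := nonempty_subtype.2 (exists_ne 0)
    have hquot (v : {v : E // v ≠ 0}) : ⟪T v, v⟫ / ‖(v : E)‖ ^ 2 ≤ 0 :=
      div_nonpos_of_nonpos_of_nonneg (hnonpos v) (sq_nonneg _)
    set μ := ⨆ v : {v : E // v ≠ 0}, ⟪T v, v⟫ / ‖(v : E)‖ ^ 2
    have hμ : μ ≠ 0 := by
      intro hμ0
      have hμT : Module.End.HasEigenvalue T μ := by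
        simpa using hT.hasEigenvalue_iSup_of_finiteDimensional
      obtain ⟨v, hv⟩ := hμT.exists_hasEigenvector
      exact hv.2 (hinj (by simpa [hμ0] using hv.apply_eq_smul))
    refine ⟨-μ, neg_pos.2 ((ciSup_le hquot).lt_of_ne hμ), fun v => ?_⟩
    rcases eq_or_ne v 0 with rfl | hv
    · simp
    · have hbdd : BddAbove (Set.range fun w : {v : E // v ≠ 0} => ⟪T w, w⟫ / ‖(w : E)‖ ^ 2) :=
        ⟨0, by rintro _ ⟨w, rfl⟩; exact hquot w⟩
      have := le_ciSup hbdd ⟨v, hv⟩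
      rw [div_le_iff₀ (by positivity)] at this
      linarith

section Gradient

variable {E : Type*} [NormedAddCommGroup E] [InnerProductSpace ℝ E] [CompleteSpace E]
  {f : E → ℝ} {K : ℝ≥0} {H : E →L[ℝ] E} {p : E}

theorem hasDerivAt_comp_add_smul (hf : Differentiable ℝ f) (x v : E) (t : ℝ) :
    HasDerivAt (fun t : ℝ => f (x + t • v)) ⟪gradient f (x + t • v), v⟫ t := by
  have hline : HasDerivAt (fun t : ℝ => x + t • v) v t := by
    simpa using ((hasDerivAt_id t).smul_const v).const_add x
  simpa [Function.comp_def] using (hf _).hasGradientAt.hasFDerivAt.comp_hasDerivAt t hline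

theorem abs_sub_sub_inner_gradient_le (hf : Differentiable ℝ f)
    (hK : LipschitzWith K (gradient f)) (x v : E) {s : ℝ} (hs : 0 ≤ s) :
    |f (x + s • v) - f x - s * ⟪gradient f x, v⟫| ≤ K * s ^ 2 * ‖v‖ ^ 2 / 2 := by
  have hderiv (t : ℝ) : HasDerivAt (fun t : ℝ => f (x + t • v) - f x - t * ⟪gradient f x, v⟫)
      (⟪gradient f (x + t • v) - gradient f x, v⟫) t := by
    rw [inner_sub_left]
    exact ((hasDerivAt_comp_add_smul hf x v t).sub_const (f x)).sub (hasDerivAt_mul_const _)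
  have hbound (t : ℝ) (ht : t ∈ Ico 0 s) :
      ‖⟪gradient f (x + t • v) - gradient f x, v⟫‖ ≤ K * t * ‖v‖ ^ 2 := by
    calc ‖⟪gradient f (x + t • v) - gradient f x, v⟫‖
        ≤ ‖gradient f (x + t • v) - gradient f x‖ * ‖v‖ := norm_inner_le_norm _ _
      _ ≤ K * ‖x + t • v - x‖ * ‖v‖ := by gcongr; exact hK.norm_sub_le _ _
      _ = K * t * ‖v‖ ^ 2 := by
        rw [add_sub_cancel_left, norm_smul, Real.norm_of_nonneg ht.1]; ring
  have hB (t : ℝ) : HasDerivAt (fun t : ℝ => K * t ^ 2 * ‖v‖ ^ 2 / 2) (K * t * ‖v‖ ^ 2) t := by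
    refine (((hasDerivAt_pow 2 t).const_mul (K : ℝ)).mul_const _ |>.div_const 2).congr_deriv ?_
    push_cast
    ring
  simpa using image_norm_le_of_norm_deriv_right_le_deriv_boundary
    (fun t _ => (hderiv t).continuousAt.continuousWithinAt)
    (fun t _ => (hderiv t).hasDerivWithinAt) (by simp) hB hbound (right_mem_Icc.2 hs)

/-- The Taylor bounds at `ρ` and at `s` give `ρ - Kρ²/2 ≤ s + Ks²/2`, i.e. `3ρ/4 ≤ 5s/4`. -/
theorem half_le_of_apply_add_smul_gradient_le (hf : Differentiable ℝ f)
    (hK : LipschitzWith K (gradient f)) {x : E} {ρ s : ℝ} (hKρ : K * ρ ≤ 1 / 2)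
    (hg : gradient f x ≠ 0) (hs : s ∈ Icc 0 ρ)
    (hmax : f (x + ρ • gradient f x) ≤ f (x + s • gradient f x)) :
    ρ / 2 ≤ s := by
  have hρ : 0 ≤ ρ := hs.1.trans hs.2
  have hG : 0 < ‖gradient f x‖ ^ 2 := by positivity
  have hρ' := abs_le.1 (abs_sub_sub_inner_gradient_le hf hK x (gradient f x) hρ)
  have hs' := abs_le.1 (abs_sub_sub_inner_gradient_le hf hK x (gradient f x) hs.1)
  rw [real_inner_self_eq_norm_sq] at hρ' hs'
  have hcmp : (ρ - K * ρ ^ 2 / 2) * ‖gradient f x‖ ^ 2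
      ≤ (s + K * s ^ 2 / 2) * ‖gradient f x‖ ^ 2 := by
    linarith
  have hcmp' := le_of_mul_le_mul_right hcmp hG
  have hKρ2 : (K : ℝ) * ρ ^ 2 ≤ ρ / 2 := by nlinarith [mul_le_mul_of_nonneg_right hKρ hρ]
  have hKs2 : (K : ℝ) * s ^ 2 ≤ s / 2 := by
    calc (K : ℝ) * s ^ 2 = s * (K * s) := by ring
      _ ≤ s * (1 / 2) := by gcongr; exacts [hs.1, (mul_le_mul_of_nonneg_left hs.2 K.2).trans hKρ]
      _ = s / 2 := by ring
  linarith

theorem IsLocalMax.gradient_eq_zero (h : IsLocalMax f p) : gradient f p = 0 := by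
  simp [gradient, h.fderiv_eq_zero]

theorem IsLocalMax.inner_apply_self_nonpos (hf : Differentiable ℝ f)
    (hH : HasFDerivAt (gradient f) H p) (hmax : IsLocalMax f p) (v : E) :
    ⟪H v, v⟫ ≤ 0 := by
  have hline : HasDerivAt (fun t : ℝ => p + t • v) v 0 := by
    simpa using ((hasDerivAt_id (0 : ℝ)).smul_const v).const_add p
  have hderiv : deriv (fun t : ℝ => f (p + t • v)) = fun t => ⟪gradient f (p + t • v), v⟫ :=
    funext fun t => (hasDerivAt_comp_add_smul hf p v t).deriv
  have hH0 : HasFDerivAt (gradient f) H (p + (0 : ℝ) • v) := by simpa using hH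
  have hderiv2 : HasDerivAt (fun t : ℝ => ⟪gradient f (p + t • v), v⟫) ⟪H v, v⟫ 0 := by
    simpa using (hH0.comp_hasDerivAt (0 : ℝ) hline).inner ℝ (hasDerivAt_const (0 : ℝ) v)
  have hcont : Continuous fun t : ℝ => p + t • v := by fun_prop
  have hmax0 : IsLocalMax f (p + (0 : ℝ) • v) := by simpa using hmax
  have := (hmax0.comp_continuous (g := fun t : ℝ => p + t • v) hcont.continuousAt
    ).deriv_deriv_nonpos (hf.continuous.comp hcont).continuousAt
  rwa [Function.comp_def, hderiv, hderiv2.deriv] at this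

theorem isSymmetric_of_hasFDerivAt_gradient (hf : Differentiable ℝ f)
    (hH : HasFDerivAt (gradient f) H p) : (H : E →ₗ[ℝ] E).IsSymmetric := by
  let e : E ≃L[ℝ] E →L[ℝ] ℝ := (InnerProductSpace.toDual ℝ E).toContinuousLinearEquiv
  have hf' (y : E) : HasFDerivAt f ((e : E →L[ℝ] E →L[ℝ] ℝ) (gradient f y)) y :=
    (hf y).hasGradientAt
  intro v w
  simpa [e, real_inner_comm] using
    second_derivative_symmetric hf' ((e : E →L[ℝ] E →L[ℝ] ℝ).hasFDerivAt.comp p hH) v w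

theorem eventually_inner_gradient_le (hH : HasFDerivAt (gradient f) H p)
    (hp : gradient f p = 0) {c : ℝ} (hc : 0 < c) (hneg : ∀ v, ⟪H v, v⟫ ≤ -c * ‖v‖ ^ 2) :
    ∀ᶠ x in 𝓝 p, ⟪gradient f x, x - p⟫ ≤ -(c / 2) * ‖x - p‖ ^ 2 := by
  filter_upwards [hH.isLittleO.bound (half_pos hc)] with x hx
  rw [hp, sub_zero] at hx
  have herr : ⟪gradient f x - H (x - p), x - p⟫ ≤ c / 2 * ‖x - p‖ ^ 2 := by
    calc ⟪gradient f x - H (x - p), x - p⟫ ≤ ‖gradient f x - H (x - p)‖ * ‖x - p‖ :=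
          real_inner_le_norm _ _
      _ ≤ c / 2 * ‖x - p‖ * ‖x - p‖ := by gcongr
      _ = c / 2 * ‖x - p‖ ^ 2 := by ring
  have := hneg (x - p)
  rw [inner_sub_left] at herr
  linarith

theorem IsLocalMax.exists_eventually_inner_gradient_le [FiniteDimensional ℝ E]
    (hf : Differentiable ℝ f) (hH : HasFDerivAt (gradient f) H p)
    (hinj : Function.Injective H) (hmax : IsLocalMax f p) :
    ∃ c > 0, ∀ᶠ x in 𝓝 p, ⟪gradient f x, x - p⟫ ≤ -c * ‖x - p‖ ^ 2 := by
  obtain ⟨c, hc, hneg⟩ := (isSymmetric_of_hasFDerivAt_gradient hf hH).exists_inner_apply_self_le_neg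
    (hmax.inner_apply_self_nonpos hf hH) hinj
  exact ⟨c / 2, half_pos hc, eventually_inner_gradient_le hH hmax.gradient_eq_zero hc hneg⟩

end Gradient

theorem IsLineSearchShiftSeq.exists_steps {d : ℕ} {f : Euc d → ℝ} {K : ℝ≥0}
    (hf : Differentiable ℝ f) (hK : LipschitzWith K (gradient f)) {ρ : ℝ} (hKρ : K * ρ ≤ 1 / 2)
    {y : Euc d} {x : ℕ → Euc d} (hx : IsLineSearchShiftSeq f ρ y x) :
    ∃ s : ℕ → ℝ, (∀ k, s k ∈ Icc 0 ρ) ∧ (∀ k, x (k + 1) = x k + s k • gradient f (x k)) ∧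
      ∀ k, gradient f (x k) ≠ 0 → ρ / 2 ≤ s k := by
  choose s hs hstep hmax using hx.2
  refine ⟨s, hs, hstep, fun k hk => half_le_of_apply_add_smul_gradient_le hf hK hKρ hk (hs k) ?_⟩
  rw [← hstep]
  exact hmax k ρ ⟨(hs k).1.trans (hs k).2, le_rfl⟩

section Contraction

variable {E : Type*} [NormedAddCommGroup E] [InnerProductSpace ℝ E] {V : E → E} {K : ℝ≥0}

theorem norm_add_smul_sq_le {u g : E} {c L s : ℝ} (hinner : ⟪g, u⟫ ≤ -c * ‖u‖ ^ 2)
    (hg : ‖g‖ ≤ L * ‖u‖) (hs : 0 ≤ s) (hsL : s * L ^ 2 ≤ c) :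
    ‖u + s • g‖ ^ 2 ≤ (1 - s * c) * ‖u‖ ^ 2 := by
  have hg2 : ‖g‖ ^ 2 ≤ L ^ 2 * ‖u‖ ^ 2 := by
    rw [← mul_pow]; exact pow_le_pow_left₀ (norm_nonneg _) hg 2
  have hquad : s ^ 2 * ‖g‖ ^ 2 ≤ s * c * ‖u‖ ^ 2 := by
    calc s ^ 2 * ‖g‖ ^ 2 ≤ s * (s * L ^ 2) * ‖u‖ ^ 2 := by nlinarith [sq_nonneg s]
      _ ≤ s * c * ‖u‖ ^ 2 := by gcongr
  rw [norm_add_sq_real, real_inner_smul_right, norm_smul, mul_pow, Real.norm_of_nonneg hs,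
    real_inner_comm]
  nlinarith [mul_le_mul_of_nonneg_left hinner hs]

variable {p : E} {c r ρ : ℝ}

theorem norm_add_smul_sub_sq_le_of_mem_closedBall (hV : LipschitzWith K V) (hp : V p = 0)
    (hball : ∀ y ∈ closedBall p r, ⟪V y, y - p⟫ ≤ -c * ‖y - p‖ ^ 2) (hc : 0 < c)
    (hρK : ρ * K ^ 2 ≤ c) {y : E} (hy : y ∈ closedBall p r) {s : ℝ} (hs : s ∈ Icc 0 ρ)
    (hhalf : V y ≠ 0 → ρ / 2 ≤ s) :
    ‖y + s • V y - p‖ ^ 2 ≤ (1 - ρ * c / 2) * ‖y - p‖ ^ 2 := by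
  by_cases hVy : V y = 0
  · have hyp : ‖y - p‖ ^ 2 = 0 := by
      have := hball y hy
      rw [hVy, inner_zero_left] at this
      nlinarith [sq_nonneg ‖y - p‖]
    simp [hVy, hyp]
  have hVle : ‖V y‖ ≤ K * ‖y - p‖ := by simpa [hp] using hV.norm_sub_le y p
  have hsK : s * (K : ℝ) ^ 2 ≤ c := (mul_le_mul_of_nonneg_right hs.2 (sq_nonneg _)).trans hρK
  calc ‖y + s • V y - p‖ ^ 2 = ‖(y - p) + s • V y‖ ^ 2 := by rw [add_sub_right_comm]
    _ ≤ (1 - s * c) * ‖y - p‖ ^ 2 := norm_add_smul_sq_le (hball y hy) hVle hs.1 hsK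
    _ ≤ (1 - ρ * c / 2) * ‖y - p‖ ^ 2 := by
      gcongr
      nlinarith [hhalf hVy]

theorem tendsto_euler_of_mem_closedBall (hV : LipschitzWith K V) (hp : V p = 0)
    (hball : ∀ y ∈ closedBall p r, ⟪V y, y - p⟫ ≤ -c * ‖y - p‖ ^ 2) (hc : 0 < c) (hρ : 0 < ρ)
    (hρK : ρ * K ^ 2 ≤ c) (hρc : ρ * c ≤ 1) {x : ℕ → E} {s : ℕ → ℝ} (hs : ∀ k, s k ∈ Icc 0 ρ)
    (hstep : ∀ k, x (k + 1) = x k + s k • V (x k)) (hhalf : ∀ k, V (x k) ≠ 0 → ρ / 2 ≤ s k)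
    {N : ℕ} (hN : x N ∈ closedBall p r) : Tendsto x atTop (𝓝 p) := by
  have hq0 : 0 ≤ 1 - ρ * c / 2 := by linarith
  have hq1 : 1 - ρ * c / 2 < 1 := by linarith [mul_pos hρ hc]
  set q := 1 - ρ * c / 2
  have hgeom (n : ℕ) : dist (x (N + n)) p ^ 2 ≤ q ^ n * r ^ 2 := by
    induction n with
    | zero => simpa using pow_le_pow_left₀ dist_nonneg (mem_closedBall.1 hN) 2
    | succ n ih =>
      have hr : 0 ≤ r := dist_nonneg.trans (mem_closedBall.1 hN)
      have hmem : x (N + n) ∈ closedBall p r := by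
        refine mem_closedBall.2 (pow_le_pow_iff_left₀ dist_nonneg hr two_ne_zero |>.1 ?_)
        exact ih.trans (mul_le_of_le_one_left (sq_nonneg r) (pow_le_one₀ hq0 hq1.le))
      rw [dist_eq_norm] at ih ⊢
      rw [← add_assoc, hstep]
      calc _ ≤ q * ‖x (N + n) - p‖ ^ 2 := norm_add_smul_sub_sq_le_of_mem_closedBall hV hp hball
              hc hρK hmem (hs _) (hhalf _)
        _ ≤ q * (q ^ n * r ^ 2) := by gcongr
        _ = q ^ (n + 1) * r ^ 2 := by ring
  have hsq : Tendsto (fun n => dist (x (N + n)) p ^ 2) atTop (𝓝 0) :=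
    squeeze_zero (fun _ => sq_nonneg _) hgeom
      (by simpa using (tendsto_pow_atTop_nhds_zero_of_lt_one hq0 hq1).mul_const (r ^ 2))
  rw [tendsto_iff_dist_tendsto_zero, ← tendsto_add_atTop_iff_nat N]
  simpa [add_comm, Real.sqrt_sq dist_nonneg] using hsq.sqrt

end Contraction

section EulerScheme

variable {E : Type*} [NormedAddCommGroup E] [NormedSpace ℝ E] {V : E → E} {K : ℝ≥0} {M : ℝ}
  {γ : ℝ → E} {p : E} {r : ℝ}

theorem norm_flow_add_sub_sub_smul_le (hV : LipschitzWith K V)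
    (hM : ∀ y, ‖V y‖ ≤ M) (hγ : ∀ t ∈ Ici (0 : ℝ), HasDerivWithinAt γ (V (γ t)) (Ici 0) t)
    {t s : ℝ} (ht : 0 ≤ t) (hs : 0 ≤ s) (y : E) :
    ‖γ (t + s) - γ t - s • V y‖ ≤ K * (M * s + ‖γ t - y‖) * s := by
  have hγI : ∀ u ∈ Icc t (t + s), HasDerivWithinAt γ (V (γ u)) (Icc t (t + s)) u :=
    fun u hu => (hγ u (ht.trans hu.1)).mono fun w hw => ht.trans hw.1
  have hspeed : ∀ u ∈ Icc t (t + s), ‖γ u - γ t‖ ≤ M * (u - t) :=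
    norm_image_sub_le_of_norm_deriv_le_segment' hγI fun u _ => hM _
  have herr : ∀ u ∈ Icc t (t + s), HasDerivWithinAt (fun u => γ u - u • V y)
      (V (γ u) - V y) (Icc t (t + s)) u := fun u hu => by
    have := (hγI u hu).sub ((hasDerivWithinAt_id u _).smul_const (V y))
    rwa [one_smul] at this
  have hbound : ∀ u ∈ Ico t (t + s), ‖V (γ u) - V y‖ ≤ K * (M * s + ‖γ t - y‖) := by
    intro u hu
    calc ‖V (γ u) - V y‖ ≤ K * ‖γ u - y‖ := hV.norm_sub_le _ _
      _ ≤ K * (‖γ u - γ t‖ + ‖γ t - y‖) := by gcongr; exact norm_sub_le_norm_sub_add_norm_sub ..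
      _ ≤ K * (M * s + ‖γ t - y‖) := by
        gcongr
        have hM0 : 0 ≤ M := (norm_nonneg _).trans (hM y)
        nlinarith [hspeed u (Ico_subset_Icc_self hu), hu.2]
  have := norm_image_sub_le_of_norm_deriv_le_segment' herr hbound (t + s) ⟨by linarith, le_rfl⟩
  rwa [add_smul, add_sub_cancel_left, show γ (t + s) - (t • V y + s • V y) - (γ t - t • V y)
    = γ (t + s) - γ t - s • V y by abel] at this

theorem norm_euler_sub_flow_le (hV : LipschitzWith K V) (hM : ∀ y, ‖V y‖ ≤ M)
    (hγ : ∀ t ∈ Ici (0 : ℝ), HasDerivWithinAt γ (V (γ t)) (Ici 0) t)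
    {x : ℕ → E} {s : ℕ → ℝ} {ρ : ℝ} (hx₀ : x 0 = γ 0) (hs : ∀ k, s k ∈ Icc 0 ρ)
    (hstep : ∀ k, x (k + 1) = x k + s k • V (x k)) (k : ℕ) :
    ‖x k - γ (∑ j ∈ Finset.range k, s j)‖
      ≤ (Real.exp (K * ∑ j ∈ Finset.range k, s j) - 1) * (M * ρ) := by
  have hM0 : 0 ≤ M := (norm_nonneg _).trans (hM 0)
  induction k with
  | zero => simp [hx₀]
  | succ k ih =>
    set t := ∑ j ∈ Finset.range k, s j
    have ht : 0 ≤ t := Finset.sum_nonneg fun j _ => (hs j).1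
    have hsk := hs k
    have hKs : 0 ≤ (K : ℝ) * s k := mul_nonneg K.2 hsk.1
    have hlocal := norm_flow_add_sub_sub_smul_le hV hM hγ ht hsk.1 (x k)
    rw [Finset.sum_range_succ, hstep, mul_add, Real.exp_add]
    calc ‖x k + s k • V (x k) - γ (t + s k)‖
        = ‖(x k - γ t) - (γ (t + s k) - γ t - s k • V (x k))‖ := by congr 1; abel
      _ ≤ ‖x k - γ t‖ + ‖γ (t + s k) - γ t - s k • V (x k)‖ := norm_sub_le _ _
      _ ≤ ‖x k - γ t‖ * (1 + K * s k) + K * s k * (M * ρ) := by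
          rw [norm_sub_rev (γ t)] at hlocal
          nlinarith [mul_le_mul_of_nonneg_left hsk.2 (mul_nonneg hKs hM0)]
      _ ≤ (Real.exp (K * t) - 1) * (M * ρ) * (1 + K * s k) + K * s k * (M * ρ) := by gcongr
      _ = (M * ρ) * (Real.exp (K * t) * (1 + K * s k) - 1) := by ring
      _ ≤ (M * ρ) * (Real.exp (K * t) * Real.exp (K * s k) - 1) := by
          have : 0 ≤ M * ρ := mul_nonneg hM0 ((hs 0).1.trans (hs 0).2)
          gcongr
          linarith [Real.add_one_le_exp (K * s k)]
      _ = _ := by ring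

theorem eq_of_tendsto_of_apply_eq_zero (hV : LipschitzWith K V)
    (hγ : ∀ t ∈ Ici (0 : ℝ), HasDerivWithinAt γ (V (γ t)) (Ici 0) t)
    (hlim : Tendsto γ atTop (𝓝 p)) {t₀ : ℝ} (ht₀ : 0 ≤ t₀) (hcrit : V (γ t₀) = 0) :
    γ t₀ = p := by
  have hconst : ∀ t ≥ t₀, γ t = γ t₀ := fun t ht =>
    ODE_solution_unique_of_mem_Icc_right (v := fun _ => V) (s := fun _ => univ) (K := K)
      (fun _ _ => hV.lipschitzOnWith)
      (fun u hu => (hγ u (ht₀.trans hu.1)).continuousWithinAt.mono fun w hw => ht₀.trans hw.1)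
      (fun u hu => (hγ u (ht₀.trans hu.1)).mono fun w hw => ht₀.trans (hu.1.trans hw))
      (fun _ _ => mem_univ _) continuousOn_const
      (fun _ _ => by simpa [hcrit] using hasDerivWithinAt_const _ _ (γ t₀))
      (fun _ _ => mem_univ _) rfl ⟨ht, le_rfl⟩
  exact tendsto_nhds_unique (tendsto_const_nhds.congr' <|
    (eventually_ge_atTop t₀).mono fun t ht => (hconst t ht).symm) hlim

theorem exists_apply_ne_zero_near_flow (hV : LipschitzWith K V)
    (hγ : ∀ t ∈ Ici (0 : ℝ), HasDerivWithinAt γ (V (γ t)) (Ici 0) t)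
    (hlim : Tendsto γ atTop (𝓝 p)) (hr : 0 < r) :
    ∃ T ≥ 0, (∀ t ≥ T, dist (γ t) p < r) ∧ ∃ ε > 0,
      ∀ t ∈ Icc 0 T, r ≤ dist (γ t) p → ∀ y, dist y (γ t) < ε → V y ≠ 0 := by
  obtain ⟨T, hT⟩ := eventually_atTop.1 (hlim (ball_mem_nhds p hr))
  refine ⟨max T 0, le_max_right _ _, fun t ht => hT t (le_of_max_le_left ht), ?_⟩
  have hcont : ContinuousOn γ (Icc 0 (max T 0)) := fun t ht =>
    (hγ t ht.1).continuousWithinAt.mono fun _ hu => hu.1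
  set S := γ '' Icc 0 (max T 0) \ ball p r
  have hS : IsCompact S := (isCompact_Icc.image_of_continuousOn hcont).diff isOpen_ball
  have hsub : S ⊆ {y | V y ≠ 0} := by
    rintro _ ⟨⟨t, ht, rfl⟩, hfar⟩ hcrit
    rw [eq_of_tendsto_of_apply_eq_zero hV hγ hlim ht.1 hcrit] at hfar
    exact hfar (mem_ball_self hr)
  obtain ⟨ε, hε, hthick⟩ :=
    hS.exists_thickening_subset_open (isOpen_ne_fun hV.continuous continuous_const) hsub
  refine ⟨ε, hε, fun t ht hfar y hy => hthick (mem_thickening_iff.2 ⟨γ t, ⟨⟨t, ht, rfl⟩, ?_⟩, hy⟩)⟩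
  exact fun h => (mem_ball.1 h).not_ge hfar

theorem eventually_mul_lt_nhdsGT (C : ℝ) {ε : ℝ} (hε : 0 < ε) :
    ∀ᶠ ρ in 𝓝[>] (0 : ℝ), ρ * C < ε :=
  nhdsWithin_le_nhds <| ((continuous_mul_const C).tendsto' 0 0 (zero_mul C)).eventually_lt_const hε

/-- Let `γ` stay in `ball p (r/2)` after time `T`, and `t k = ∑_{j<k} s j`. For small `ρ`, `x k`
is `O(ρ)`-close to `γ (t k)` while `t k ≤ T + 1`. If `x` never entered `closedBall p r`, then
inductively `t k ≤ T`, so `γ (t k)` lies outside `ball p (r/2)`, away from the zeros of `V`; thus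
`V (x k) ≠ 0`, `s k ≥ ρ/2` and `t k ≥ kρ/2` for all `k`, which is absurd. -/
theorem eventually_euler_exists_mem_closedBall (hV : LipschitzWith K V) (hM : ∀ y, ‖V y‖ ≤ M)
    (hγ : ∀ t ∈ Ici (0 : ℝ), HasDerivWithinAt γ (V (γ t)) (Ici 0) t)
    (hlim : Tendsto γ atTop (𝓝 p)) (hr : 0 < r) :
    ∀ᶠ ρ in 𝓝[>] 0, ∀ (x : ℕ → E) (s : ℕ → ℝ), x 0 = γ 0 → (∀ k, s k ∈ Icc 0 ρ) →
      (∀ k, x (k + 1) = x k + s k • V (x k)) → (∀ k, V (x k) ≠ 0 → ρ / 2 ≤ s k) →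
      ∃ N, x N ∈ closedBall p r := by
  obtain ⟨T, hT0, hnear, ε, hε, hcrit⟩ := exists_apply_ne_zero_near_flow hV hγ hlim (half_pos hr)
  set C := (Real.exp (K * (T + 1)) - 1) * M
  filter_upwards [Ioo_mem_nhdsGT one_pos, eventually_mul_lt_nhdsGT C hε,
    eventually_mul_lt_nhdsGT C (half_pos hr)] with ρ hρ hρε hρr
  intro x s hx₀ hs hstep hhalf
  by_contra! hout
  set t := fun k => ∑ j ∈ Finset.range k, s j
  have htsucc (k : ℕ) : t (k + 1) = t k + s k := Finset.sum_range_succ _ _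
  have ht0 (k : ℕ) : 0 ≤ t k := Finset.sum_nonneg fun j _ => (hs j).1
  have herr (k : ℕ) (hk : t k ≤ T + 1) : dist (x k) (γ (t k)) < min ε (r / 2) := by
    have hM0 : 0 ≤ M := (norm_nonneg _).trans (hM 0)
    have hexp : Real.exp (K * t k) ≤ Real.exp (K * (T + 1)) := by gcongr
    calc dist (x k) (γ (t k)) ≤ (Real.exp (K * t k) - 1) * (M * ρ) := by
          rw [dist_eq_norm]; exact norm_euler_sub_flow_le hV hM hγ hx₀ hs hstep k
      _ ≤ ρ * C := by
          have := mul_le_mul_of_nonneg_right (sub_le_sub_right hexp 1) (mul_nonneg hM0 hρ.1.le)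
          linarith
      _ < min ε (r / 2) := lt_min hρε hρr
  have hprog (k : ℕ) : t k ≤ T ∧ k * (ρ / 2) ≤ t k := by
    induction k with
    | zero => simpa [t] using hT0
    | succ k ih =>
      have hek := herr k (by linarith [ih.1])
      have hfar : r / 2 ≤ dist (γ (t k)) p := by
        have := dist_triangle (x k) (γ (t k)) p
        linarith [min_le_right ε (r / 2), not_le.1 (mt mem_closedBall.2 (hout k))]
      have hstep_ge := hhalf k (hcrit _ ⟨ht0 k, ih.1⟩ hfar _ (hek.trans_le (min_le_left _ _)))
      refine ⟨not_lt.1 fun hT => hout (k + 1) (mem_closedBall.2 ?_), ?_⟩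
      · have := herr (k + 1) (by linarith [htsucc k, (hs k).2, hρ.2])
        linarith [dist_triangle (x (k + 1)) (γ (t (k + 1))) p, hnear _ hT.le,
          min_le_right ε (r / 2)]
      · rw [htsucc]; push_cast; linarith [ih.2]
  obtain ⟨k, hk⟩ := exists_nat_gt (2 * T / ρ)
  rw [div_lt_iff₀ hρ.1] at hk
  linarith [hprog k]

end EulerScheme

section NiceDensity

variable {d : ℕ} {f : Euc d → ℝ}

theorem IsNiceDensity.norm_gradient_le_iSup (hf : IsNiceDensity f) (y : Euc d) :
    ‖gradient f y‖ ≤ ⨆ z : Euc d, ‖gradient f z‖ := by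
  obtain ⟨-, -, -, -, -, -, ⟨M, hM⟩, -⟩ := hf
  exact le_ciSup ⟨M, by rintro _ ⟨z, rfl⟩; exact hM z⟩ y

theorem IsNiceDensity.lipschitzWith_gradient (hf : IsNiceDensity f) :
    LipschitzWith (⨆ z : Euc d, ‖hess f z‖).toNNReal (gradient f) := by
  obtain ⟨-, -, -, -, hdg, -, -, ⟨M, hM⟩, -⟩ := hf
  refine lipschitzWith_of_nnnorm_fderiv_le hdg fun y => ?_
  rw [← NNReal.coe_le_coe, coe_nnnorm,
    Real.coe_toNNReal _ (Real.iSup_nonneg fun _ => norm_nonneg _)]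
  exact le_ciSup ⟨M, by rintro _ ⟨z, rfl⟩; exact hM z⟩ y

end NiceDensity

theorem lineSearchShift_consistent_general
    {d : ℕ} (f : Euc d → ℝ) (hf : IsNiceDensity f)
    (xstar : Euc d) (hmode : IsLocalMax f xstar)
    (x₀ : Euc d) (γ : ℝ → Euc d) (hγ : IsGradFlow f x₀ γ)
    (hbasin : Tendsto γ atTop (𝓝 xstar)) :
    (∃ ρ₀ > (0:ℝ), ∀ ρ, 0 < ρ → ρ ≤ ρ₀ →
      ∀ x : ℕ → Euc d, IsLineSearchShiftSeq f ρ x₀ x →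
        Tendsto x atTop (𝓝 xstar)) ∧
    (∀ ρ : ℝ, 0 < ρ → (⨆ z : Euc d, ‖hess f z‖) * ρ ≤ 1 / 2 →
      ∀ y₀ : Euc d, ∀ x : ℕ → Euc d, IsLineSearchShiftSeq f ρ y₀ x →
        ∀ k : ℕ, (∀ m, m ≤ k → gradient f (x m) ≠ 0) →
          (ρ / 2) * ‖gradient f (x k)‖ ≤ ‖x (k+1) - x k‖ ∧
          ‖x (k+1) - x k‖ ≤ ρ * (⨆ z : Euc d, ‖gradient f z‖)) := by
  set K := (⨆ z : Euc d, ‖hess f z‖).toNNReal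
  have hKeq : (K : ℝ) = ⨆ z : Euc d, ‖hess f z‖ :=
    Real.coe_toNNReal _ (Real.iSup_nonneg fun _ => norm_nonneg _)
  have hK : LipschitzWith K (gradient f) := hf.lipschitzWith_gradient
  have hM := hf.norm_gradient_le_iSup
  obtain ⟨-, -, -, hdf, hdg, -, -, -, -, -, -, hmorse⟩ := hf
  refine ⟨?_, fun ρ hρ hKρ y₀ x hx k hcrit => ?_⟩
  · obtain ⟨c, hc, hnear⟩ := hmode.exists_eventually_inner_gradient_le hdf (hdg xstar).hasFDerivAt
      (hmorse xstar hmode.gradient_eq_zero).1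
    obtain ⟨r, hr, hball⟩ := nhds_basis_closedBall.eventually_iff.1 hnear
    obtain ⟨ρ₀, hρ₀, hsmall⟩ := mem_nhdsGT_iff_exists_Ioc_subset.1 <|
      (eventually_euler_exists_mem_closedBall hK hM hγ.2 hbasin hr).and <|
      (eventually_mul_lt_nhdsGT K one_half_pos).and <|
      (eventually_mul_lt_nhdsGT (K ^ 2) hc).and (eventually_mul_lt_nhdsGT c one_pos)
    refine ⟨ρ₀, hρ₀, fun ρ hρ hρ₀ x hx => ?_⟩
    obtain ⟨hreach, hρK, hρK2, hρc⟩ := hsmall ⟨hρ, hρ₀⟩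
    obtain ⟨s, hs, hstep, hhalf⟩ := hx.exists_steps hdf hK (by linarith)
    obtain ⟨N, hN⟩ := hreach x s (hx.1.trans hγ.1.symm) hs hstep hhalf
    exact tendsto_euler_of_mem_closedBall hK hmode.gradient_eq_zero hball hc hρ hρK2.le hρc.le
      hs hstep hhalf hN
  · obtain ⟨s, hs, hstep, hhalf⟩ := hx.exists_steps hdf hK (by rwa [hKeq])
    rw [hstep, add_sub_cancel_left, norm_smul, Real.norm_of_nonneg (hs k).1]
    exact ⟨mul_le_mul_of_nonneg_right (hhalf k (hcrit k le_rfl)) (norm_nonneg _),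
      mul_le_mul (hs k).2 (hM _) (norm_nonneg _) hρ.le⟩

/-- Line Search Shift is consistent: started in the basin of attraction of a
mode `x⋆`, for `ρ` small enough every Line Search Shift sequence converges to `x⋆`. Moreover,
if `κ₂ ρ ≤ 1/2`, then until a critical point is reached the shifts satisfy
`(ρ/2)‖∇f(x_k)‖ ≤ ‖x_{k+1} − x_k‖ ≤ ρ κ₁`. -/
theorem lineSearchShift_consistent
    {d : ℕ} (hd : 0 < d) (f : Euc d → ℝ) (hf : IsNiceDensity f)
    (xstar : Euc d) (hmode : IsLocalMax f xstar)
    (x₀ : Euc d) (γ : ℝ → Euc d) (hγ : IsGradFlow f x₀ γ)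
    (hbasin : Tendsto γ atTop (𝓝 xstar)) :
    (∃ ρ₀ > (0:ℝ), ∀ ρ, 0 < ρ → ρ ≤ ρ₀ →
      ∀ x : ℕ → Euc d, IsLineSearchShiftSeq f ρ x₀ x →
        Tendsto x atTop (𝓝 xstar)) ∧
    (∀ ρ : ℝ, 0 < ρ → (⨆ z : Euc d, ‖hess f z‖) * ρ ≤ 1 / 2 →
      ∀ y₀ : Euc d, ∀ x : ℕ → Euc d, IsLineSearchShiftSeq f ρ y₀ x →
        ∀ k : ℕ, (∀ m, m ≤ k → gradient f (x m) ≠ 0) →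
          (ρ / 2) * ‖gradient f (x k)‖ ≤ ‖x (k+1) - x k‖ ∧
          ‖x (k+1) - x k‖ ≤ ρ * (⨆ z : Euc d, ‖gradient f z‖)) :=
  lineSearchShift_consistent_general f hf xstar hmode x₀ γ hγ hbasin
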